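/- Let G be a connected SVD-closed subgroup of U_n with Lie algebra 𝔤 ⊆ 𝔲_n, let M ∈ G, let Y be a generalized principal 𝔤-logarithm of M, and let X ∈ 𝔤 be any matrix with exp(X) = M. Then ‖Y‖_φ ≤ ‖X‖_φ in the Frobenius norm, with equality if and only if X is itself a generalized principal 𝔤-logarithm of M. -/

import Mathlib

open Matrix

variable {n : ℕ}

/-- A family of nonzero complex `n×n` matrices is an SVD-system if
`Aₕ* Aⱼ = Aₕ Aⱼ* = 0` for `h ≠ j` and `Aⱼ Aⱼ* Aⱼ = Aⱼ` for every `j`. -/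
def IsSVDSystem {p : ℕ} (A : Fin p → Matrix (Fin n) (Fin n) ℂ) : Prop :=
  (∀ j, A j ≠ 0) ∧
  (∀ h j, h ≠ j → (A h)ᴴ * A j = 0 ∧ A h * (A j)ᴴ = 0) ∧
  (∀ j, A j * (A j)ᴴ * A j = A j)

/-- `M = Σⱼ σⱼ Aⱼ` is an SVD-decomposition: the `Aⱼ` form an SVD-system and
`σ₁ > σ₂ > ⋯ > σ_p > 0`. -/
def IsSVDDecomposition {p : ℕ} (M : Matrix (Fin n) (Fin n) ℂ)
    (σ : Fin p → ℝ) (A : Fin p → Matrix (Fin n) (Fin n) ℂ) : Prop :=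
  IsSVDSystem A ∧ StrictAnti σ ∧ (∀ j, 0 < σ j) ∧ M = ∑ j, (σ j : ℂ) • A j

/-- A set `g` of matrices is SVD-closed if it contains all SVD-components of each of its
(nonzero) elements. -/
def SVDClosedSet (g : Set (Matrix (Fin n) (Fin n) ℂ)) : Prop :=
  ∀ M ∈ g, ∀ (p : ℕ) (σ : Fin p → ℝ) (A : Fin p → Matrix (Fin n) (Fin n) ℂ),
    IsSVDDecomposition M σ A → ∀ j, A j ∈ g

/-- The Lie algebra of a closed matrix group `G` (viewed as a set of matrices):
all `X` whose one-parameter group stays in `G`. -/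
def lieAlgOf (G : Set (Matrix (Fin n) (Fin n) ℂ)) : Set (Matrix (Fin n) (Fin n) ℂ) :=
  {X | ∀ t : ℝ, NormedSpace.exp ((t : ℂ) • X) ∈ G}

/-- The set of generalized principal `𝔤`-logarithms of `M`: the `L ∈ 𝔤` with `exp L = M`
and `−π ≤ Im λ ≤ π` for every eigenvalue `λ` of `L`. -/
def plog (g : Set (Matrix (Fin n) (Fin n) ℂ)) (M : Matrix (Fin n) (Fin n) ℂ) :
    Set (Matrix (Fin n) (Fin n) ℂ) :=
  {L | L ∈ g ∧ NormedSpace.exp L = M ∧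
    ∀ μ ∈ spectrum ℂ L, -Real.pi ≤ μ.im ∧ μ.im ≤ Real.pi}

/-- The Frobenius norm `‖A‖_φ = √(tr(A Aᴴ))`. -/
noncomputable def frobNorm (A : Matrix (Fin n) (Fin n) ℂ) : ℝ :=
  Real.sqrt ((A * Aᴴ).trace.re)

/-- `G` is a subgroup of `U_n` which is closed and connected. -/
def IsConnectedClosedSubgroupOfUn (G : Set (Matrix (Fin n) (Fin n) ℂ)) : Prop :=
  (∀ M ∈ G, M ∈ Matrix.unitaryGroup (Fin n) ℂ) ∧
  (1 : Matrix (Fin n) (Fin n) ℂ) ∈ G ∧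
  (∀ X ∈ G, ∀ Y ∈ G, X * Y ∈ G) ∧ (∀ X ∈ G, Xᴴ ∈ G) ∧
  IsClosed G ∧ IsConnected G

open NormedSpace in
lemma skew_of_lieAlg {G : Set (Matrix (Fin n) (Fin n) ℂ)}
    (hUn : ∀ M ∈ G, M ∈ Matrix.unitaryGroup (Fin n) ℂ)
    {X : Matrix (Fin n) (Fin n) ℂ} (hX : X ∈ lieAlgOf G) : Xᴴ = -X := by
  letI : SeminormedRing (Matrix (Fin n) (Fin n) ℂ) := Matrix.linftyOpSemiNormedRing
  letI : NormedRing (Matrix (Fin n) (Fin n) ℂ) := Matrix.linftyOpNormedRing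
  letI : NormedAlgebra ℂ (Matrix (Fin n) (Fin n) ℂ) := Matrix.linftyOpNormedAlgebra
  have key : (fun t : ℝ => exp ((t:ℂ) • Xᴴ)) = (fun t : ℝ => exp ((t:ℂ) • (-X))) := by
    funext t
    have h1 : exp ((t:ℂ) • X) ∈ Matrix.unitaryGroup (Fin n) ℂ := hUn _ (hX t)
    have h2 : (exp ((t:ℂ) • X))ᴴ * exp ((t:ℂ) • X) = 1 := by
      have := Matrix.mem_unitaryGroup_iff'.mp h1
      simpa [Matrix.star_eq_conjTranspose] using this
    have hconj : exp ((t:ℂ) • Xᴴ) = (exp ((t:ℂ) • X))ᴴ := by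
      rw [← Matrix.exp_conjTranspose]
      congr 1
      rw [conjTranspose_smul]
      congr 1
      simp [Complex.conj_ofReal]
    have h3 : exp ((t:ℂ) • X) * exp ((t:ℂ) • (-X)) = 1 := by
      rw [smul_neg, ← Matrix.exp_add_of_commute ((t:ℂ) • X) _ (Commute.neg_right (Commute.refl _))]
      simp [exp_zero]
    calc exp ((t:ℂ) • Xᴴ) = exp ((t:ℂ) • Xᴴ) * (exp ((t:ℂ) • X) * exp ((t:ℂ) • (-X))) := by
          rw [h3, mul_one]
      _ = (exp ((t:ℂ) • Xᴴ) * exp ((t:ℂ) • X)) * exp ((t:ℂ) • (-X)) := by rw [mul_assoc]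
      _ = exp ((t:ℂ) • (-X)) := by rw [hconj, h2, one_mul]
  have hR : ∀ A : Matrix (Fin n) (Fin n) ℂ, HasDerivAt (fun t : ℝ => exp ((t:ℂ) • A)) A 0 := by
    intro A
    have h := hasDerivAt_exp_smul_const (𝕂 := ℂ) A (0:ℂ)
    simp only [zero_smul, exp_zero, one_mul] at h
    have h2 : HasDerivAt (fun u : ℂ => exp (u • A)) A ((0:ℝ):ℂ) := by rw [Complex.ofReal_zero]; exact h
    have h3 := HasDerivAt.scomp (x := (0:ℝ)) h2 (Complex.ofRealCLM.hasDerivAt)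
    simp at h3; exact h3
  have d1 := hR Xᴴ
  have d2 := hR (-X)
  rw [key] at d1
  exact d1.unique d2

lemma skew_decomp {X : Matrix (Fin n) (Fin n) ℂ} (hX : Xᴴ = -X) :
    ∃ (U : Matrix (Fin n) (Fin n) ℂ) (d : Fin n → ℝ),
      U * Uᴴ = 1 ∧ Uᴴ * U = 1 ∧
      X = U * diagonal (fun k => (d k : ℂ) * Complex.I) * Uᴴ := by
  have hH : ((-Complex.I) • X).IsHermitian := by
    unfold Matrix.IsHermitian
    rw [conjTranspose_smul, hX]
    simp
  refine ⟨hH.eigenvectorUnitary, hH.eigenvalues, ?_, ?_, ?_⟩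
  · simpa [Matrix.star_eq_conjTranspose] using
      Matrix.mem_unitaryGroup_iff.mp hH.eigenvectorUnitary.2
  · simpa [Matrix.star_eq_conjTranspose] using
      Matrix.mem_unitaryGroup_iff'.mp hH.eigenvectorUnitary.2
  · have hs := hH.spectral_theorem
    have : X = Complex.I • ((-Complex.I) • X) := by
      rw [smul_smul]; simp
    have hdg : Complex.I • diagonal ((RCLike.ofReal ∘ hH.eigenvalues : Fin n → ℂ))
        = diagonal (fun k => (hH.eigenvalues k : ℂ) * Complex.I) := by
      ext i j
      by_cases h : i = j <;> simp [Matrix.diagonal_apply, h, mul_comm]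
    calc X = Complex.I • ((-Complex.I) • X) := this
      _ = Complex.I • ((hH.eigenvectorUnitary : Matrix (Fin n) (Fin n) ℂ) *
            diagonal (RCLike.ofReal ∘ hH.eigenvalues) *
            star (hH.eigenvectorUnitary : Matrix (Fin n) (Fin n) ℂ)) := congrArg _ hs
      _ = (hH.eigenvectorUnitary : Matrix (Fin n) (Fin n) ℂ) *
            (Complex.I • diagonal (RCLike.ofReal ∘ hH.eigenvalues)) *
            ((hH.eigenvectorUnitary : Matrix (Fin n) (Fin n) ℂ))ᴴ := by
          rw [Matrix.star_eq_conjTranspose, ← smul_mul_assoc, ← mul_smul_comm]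
      _ = (hH.eigenvectorUnitary : Matrix (Fin n) (Fin n) ℂ) *
            diagonal (fun k => (hH.eigenvalues k : ℂ) * Complex.I) *
            ((hH.eigenvectorUnitary : Matrix (Fin n) (Fin n) ℂ))ᴴ := by rw [hdg]

lemma det_conj_diag {U : Matrix (Fin n) (Fin n) ℂ} (hU : U * Uᴴ = 1)
    (v : Fin n → ℂ) (z : ℂ) :
    Matrix.det (z • (1 : Matrix (Fin n) (Fin n) ℂ) - U * diagonal v * Uᴴ)
      = ∏ k, (z - v k) := by
  have h1 : z • (1 : Matrix (Fin n) (Fin n) ℂ) - U * diagonal v * Uᴴ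
      = U * diagonal (fun k => z - v k) * Uᴴ := by
    have : z • (1 : Matrix (Fin n) (Fin n) ℂ) = U * diagonal (fun _ => z) * Uᴴ := by
      rw [show diagonal (fun _ : Fin n => z) = z • (1 : Matrix (Fin n) (Fin n) ℂ) by
        ext i j; by_cases h : i = j <;> simp [Matrix.diagonal_apply, h, Matrix.one_apply]]
      rw [mul_smul_comm, smul_mul_assoc, mul_one, hU]
    rw [this]
    rw [show (diagonal fun k => z - v k) = diagonal (fun _ : Fin n => z) - diagonal v by
      rw [diagonal_sub]]
    rw [Matrix.mul_sub, Matrix.sub_mul]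
  have hdet : U.det * Uᴴ.det = 1 := by rw [← det_mul, hU, det_one]
  rw [h1, det_mul, det_mul, det_diagonal]
  linear_combination (∏ k : Fin n, (z - v k)) * hdet

lemma spectrum_conj_diag {U : Matrix (Fin n) (Fin n) ℂ} (hU : U * Uᴴ = 1)
    (v : Fin n → ℂ) :
    spectrum ℂ (U * diagonal v * Uᴴ) = Set.range v := by
  ext z
  rw [spectrum.mem_iff, Matrix.isUnit_iff_isUnit_det]
  have halg : (algebraMap ℂ (Matrix (Fin n) (Fin n) ℂ)) z = z • 1 := by
    rw [Algebra.algebraMap_eq_smul_one]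
  rw [halg, det_conj_diag hU, isUnit_iff_ne_zero, not_ne_iff, Finset.prod_eq_zero_iff]
  constructor
  · rintro ⟨k, _, hk⟩; exact ⟨k, (sub_eq_zero.mp hk).symm⟩
  · rintro ⟨k, rfl⟩; exact ⟨k, Finset.mem_univ k, by simp⟩

lemma frob_sq_of_decomp {U : Matrix (Fin n) (Fin n) ℂ} (hU : U * Uᴴ = 1) (hU' : Uᴴ * U = 1)
    (d : Fin n → ℝ) :
    (((U * diagonal (fun k => (d k : ℂ) * Complex.I) * Uᴴ) *
      (U * diagonal (fun k => (d k : ℂ) * Complex.I) * Uᴴ)ᴴ).trace).re = ∑ k, (d k)^2 := by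
  set D : Matrix (Fin n) (Fin n) ℂ := diagonal (fun k => (d k : ℂ) * Complex.I) with hD
  have h1 : (U * D * Uᴴ) * (U * D * Uᴴ)ᴴ = U * (D * Dᴴ) * Uᴴ := by
    simp only [conjTranspose_mul, conjTranspose_conjTranspose]
    rw [mul_assoc (U*D) Uᴴ, ← mul_assoc Uᴴ U, hU', one_mul]
    simp only [Matrix.mul_assoc]
  have h2 : D * Dᴴ = diagonal (fun k => ((d k)^2 : ℂ)) := by
    rw [hD, diagonal_conjTranspose, diagonal_mul_diagonal]
    have : (fun k => ((d k : ℂ) * Complex.I) * (star fun k => (d k : ℂ) * Complex.I) k)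
        = fun k => ((d k)^2 : ℂ) := by
      funext k
      simp only [Pi.star_apply, Complex.star_def, Complex.mul_conj]
      push_cast [Complex.normSq_mul, Complex.normSq_ofReal, Complex.normSq_I]
      ring
    rw [this]
  rw [h1, h2, Matrix.trace_mul_cycle, hU', one_mul, trace_diagonal]
  have : (∑ k, ((d k : ℂ))^2) = ((∑ k, (d k)^2 : ℝ) : ℂ) := by push_cast; ring
  rw [this, Complex.ofReal_re]

lemma exp_of_decomp {U : Matrix (Fin n) (Fin n) ℂ} (hU : U * Uᴴ = 1) (hU' : Uᴴ * U = 1)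
    (w : Fin n → ℂ) :
    NormedSpace.exp (U * diagonal w * Uᴴ) = U * diagonal (fun k => Complex.exp (w k)) * Uᴴ := by
  let u : (Matrix (Fin n) (Fin n) ℂ)ˣ := ⟨U, Uᴴ, hU, hU'⟩
  have hcoe : (↑u⁻¹ : Matrix (Fin n) (Fin n) ℂ) = Uᴴ := rfl
  have := Matrix.exp_units_conj u (diagonal w)
  rw [hcoe] at this
  rw [show (↑u : Matrix (Fin n) (Fin n) ℂ) = U from rfl] at this
  rw [this, Matrix.exp_diagonal]
  congr 1
  rw [Pi.exp_def]
  funext k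
  simp [Complex.exp_eq_exp_ℂ]

lemma multiset_of_eval_eq (f g : Fin n → ℂ)
    (h : ∀ z : ℂ, ∏ k, (z - f k) = ∏ k, (z - g k)) :
    Multiset.map f Finset.univ.val = Multiset.map g Finset.univ.val := by
  have hpoly : ((Multiset.map f Finset.univ.val).map (fun a => Polynomial.X - Polynomial.C a)).prod
      = ((Multiset.map g Finset.univ.val).map (fun a => Polynomial.X - Polynomial.C a)).prod := by
    apply Polynomial.funext
    intro z
    rw [Polynomial.eval_multiset_prod, Polynomial.eval_multiset_prod]
    rw [Multiset.map_map, Multiset.map_map, Multiset.map_map, Multiset.map_map]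
    have h1 : ∀ F : Fin n → ℂ,
        (Multiset.map ((Polynomial.eval z ∘ fun a => Polynomial.X - Polynomial.C a) ∘ F)
          Finset.univ.val).prod = ∏ k, (z - F k) := by
      intro F
      rw [Finset.prod]
      congr 1
      apply Multiset.map_congr rfl
      intro x _
      simp
    rw [h1, h1, h z]
  have := congrArg Polynomial.roots hpoly
  rwa [Polynomial.roots_multiset_prod_X_sub_C, Polynomial.roots_multiset_prod_X_sub_C] at this

lemma arg_exp_sq (θ : ℝ) :
    (Complex.arg (Complex.exp ((θ:ℂ) * Complex.I)))^2 ≤ θ^2 ∧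
    ((Complex.arg (Complex.exp ((θ:ℂ) * Complex.I)))^2 = θ^2 ↔ |θ| ≤ Real.pi) := by
  set z := Complex.exp ((θ:ℂ) * Complex.I) with hz
  set a := Complex.arg z with ha
  have hz0 : z ≠ 0 := Complex.exp_ne_zero _
  have habs : ‖z‖ = 1 := Complex.norm_exp_ofReal_mul_I θ
  have haI : Complex.exp ((a:ℂ) * Complex.I) = z := by
    have := Complex.norm_mul_exp_arg_mul_I z
    rwa [habs, Complex.ofReal_one, one_mul] at this
  have hmem := Complex.arg_mem_Ioc z
  obtain ⟨m, hm⟩ := Complex.exp_eq_exp_iff_exists_int.mp (haI.trans hz)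
  have hre : a = θ + m * (2 * Real.pi) := by
    have h' := congrArg Complex.im hm
    simpa using h'
  have hpi := Real.pi_pos
  have h1 : a ≤ Real.pi := hmem.2
  have h2 : -Real.pi < a := hmem.1
  have haa : |a| ≤ Real.pi := abs_le.mpr ⟨le_of_lt h2, h1⟩
  rcases eq_or_ne m 0 with rfl | hm0
  · have haθ : a = θ := by simpa using hre
    refine ⟨by rw [haθ], ⟨fun _ => by rw [← haθ]; exact haa, fun _ => by rw [haθ]⟩⟩
  · have hm1 : (1:ℝ) ≤ |(m:ℝ)| := by
      rw [← Int.cast_abs]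
      exact_mod_cast Int.one_le_abs hm0
    have habs1 : |2*Real.pi*(m:ℝ)| - |a| ≤ |θ| := by
      have h := abs_sub_abs_le_abs_sub (2*Real.pi*(m:ℝ)) a
      rw [show 2*Real.pi*(m:ℝ) - a = -θ by linarith, abs_neg] at h
      exact h
    have habs2 : 2*Real.pi ≤ |2*Real.pi*(m:ℝ)| := by
      rw [abs_mul, abs_of_pos (by positivity : (0:ℝ) < 2*Real.pi)]
      nlinarith
    have hθπ : Real.pi ≤ |θ| := by linarith
    have hle : a^2 ≤ θ^2 := by
      have := sq_abs a
      have := sq_abs θ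
      nlinarith [abs_nonneg a, abs_nonneg θ]
    refine ⟨hle, ⟨fun heq => ?_, fun hθ => ?_⟩⟩
    · have : |a| = |θ| := by
        have := sq_abs a; have := sq_abs θ
        nlinarith [abs_nonneg a, abs_nonneg θ]
      linarith
    · have hθeq : |θ| = Real.pi := le_antisymm hθ hθπ
      have hm2 : |2*Real.pi*(m:ℝ)| ≤ 2*Real.pi := by
        have h := abs_sub_abs_le_abs_sub a (2*Real.pi*(m:ℝ))
        have : a - 2*Real.pi*(m:ℝ) = θ := by linarith
        nlinarith [abs_sub_abs_le_abs_sub (2*Real.pi*(m:ℝ)) (a - θ), abs_nonneg a,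
          abs_sub (2*Real.pi*(m:ℝ)) a]
      have hmle : |(m:ℝ)| ≤ 1 := by
        rw [abs_mul, abs_of_pos (by positivity : (0:ℝ) < 2*Real.pi)] at hm2
        nlinarith
      have hmint : |m| ≤ 1 := by
        have : ((|m| : ℤ) : ℝ) ≤ ((1:ℤ):ℝ) := by rw [Int.cast_abs]; exact_mod_cast hmle
        exact_mod_cast this
      obtain ⟨hml, hmr⟩ : -1 ≤ m ∧ m ≤ 1 := abs_le.mp hmint
      interval_cases m
      · -- m = -1 : a = θ - 2π, contradiction with a > -π, θ ≤ π
        exfalso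
        have hθle : θ ≤ Real.pi := le_trans (le_abs_self θ) (le_of_eq hθeq)
        push_cast at hre
        linarith
      · exact absurd rfl hm0
      · -- m = 1 : a = θ + 2π, a ≤ π ⟹ θ ≤ -π; also θ ≥ -π so θ = -π, a = π
        have hθge : -Real.pi ≤ θ := by
          have := neg_abs_le θ
          linarith [hθeq]
        push_cast at hre
        have hθeq2 : θ = -Real.pi := by linarith
        rw [hre, hθeq2]
        ring

theorem stmt_16 (G : Set (Matrix (Fin n) (Fin n) ℂ))
    (hG : IsConnectedClosedSubgroupOfUn G)
    (hSVD : SVDClosedSet (lieAlgOf G))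
    (M : Matrix (Fin n) (Fin n) ℂ) (hM : M ∈ G)
    (Y : Matrix (Fin n) (Fin n) ℂ) (hY : Y ∈ plog (lieAlgOf G) M)
    (X : Matrix (Fin n) (Fin n) ℂ) (hX : X ∈ lieAlgOf G)
    (hexp : NormedSpace.exp X = M) :
    frobNorm Y ≤ frobNorm X ∧
      (frobNorm Y = frobNorm X ↔ X ∈ plog (lieAlgOf G) M) := by
  obtain ⟨hYg, hYexp, hYspec⟩ := hY
  have hXskew : Xᴴ = -X := skew_of_lieAlg hG.1 hX
  have hYskew : Yᴴ = -Y := skew_of_lieAlg hG.1 hYg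
  obtain ⟨U, d, hU, hU', hXd⟩ := skew_decomp hXskew
  obtain ⟨V, e, hV, hV', hYd⟩ := skew_decomp hYskew
  have hexpX : U * diagonal (fun k => Complex.exp ((d k : ℂ) * Complex.I)) * Uᴴ = M := by
    rw [← hexp, hXd, exp_of_decomp hU hU']
  have hexpY : V * diagonal (fun k => Complex.exp ((e k : ℂ) * Complex.I)) * Vᴴ = M := by
    rw [← hYexp, hYd, exp_of_decomp hV hV']
  have hdet : ∀ z : ℂ, ∏ k, (z - Complex.exp ((d k : ℂ) * Complex.I))
      = ∏ k, (z - Complex.exp ((e k : ℂ) * Complex.I)) := by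
    intro z
    rw [← det_conj_diag hU (fun k => Complex.exp ((d k : ℂ) * Complex.I)) z,
      ← det_conj_diag hV (fun k => Complex.exp ((e k : ℂ) * Complex.I)) z, hexpX, hexpY]
  have hmult := multiset_of_eval_eq _ _ hdet
  have hsum : ∀ h : ℂ → ℝ,
      ∑ k, h (Complex.exp ((d k : ℂ) * Complex.I)) = ∑ k, h (Complex.exp ((e k : ℂ) * Complex.I)) := by
    intro h
    rw [Finset.sum_eq_multiset_sum, Finset.sum_eq_multiset_sum]
    rw [show (Multiset.map (fun k => h (Complex.exp ((d k : ℂ) * Complex.I))) Finset.univ.val)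
        = Multiset.map h (Multiset.map (fun k => Complex.exp ((d k : ℂ) * Complex.I))
          Finset.univ.val) by rw [Multiset.map_map]; rfl]
    rw [show (Multiset.map (fun k => h (Complex.exp ((e k : ℂ) * Complex.I))) Finset.univ.val)
        = Multiset.map h (Multiset.map (fun k => Complex.exp ((e k : ℂ) * Complex.I))
          Finset.univ.val) by rw [Multiset.map_map]; rfl]
    rw [hmult]
  have hspecX : spectrum ℂ X = Set.range (fun k => (d k : ℂ) * Complex.I) := by
    rw [hXd]; exact spectrum_conj_diag hU _
  have hspecY : spectrum ℂ Y = Set.range (fun k => (e k : ℂ) * Complex.I) := by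
    rw [hYd]; exact spectrum_conj_diag hV _
  have him : ∀ (c : ℝ), ((c : ℂ) * Complex.I).im = c := by intro c; simp
  have hebd : ∀ k, |e k| ≤ Real.pi := by
    intro k
    have hk : (e k : ℂ) * Complex.I ∈ spectrum ℂ Y := by
      rw [hspecY]; exact ⟨k, rfl⟩
    have h := hYspec _ hk
    rw [him] at h
    exact abs_le.mpr ⟨h.1, h.2⟩
  have hFX : frobNorm X = Real.sqrt (∑ k, (d k)^2) := by
    unfold frobNorm
    rw [hXd, frob_sq_of_decomp hU hU']
  have hFY : frobNorm Y = Real.sqrt (∑ k, (e k)^2) := by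
    unfold frobNorm
    rw [hYd, frob_sq_of_decomp hV hV']
  have hEsum : ∑ k, (e k)^2 = ∑ k, (Complex.arg (Complex.exp ((d k : ℂ) * Complex.I)))^2 := by
    have h1 : ∑ k, (e k)^2 = ∑ k, (Complex.arg (Complex.exp ((e k : ℂ) * Complex.I)))^2 :=
      Finset.sum_congr rfl (fun k _ => ((arg_exp_sq (e k)).2.mpr (hebd k)).symm)
    rw [h1, ← hsum (fun z => (Complex.arg z)^2)]
  have hterm : ∀ k ∈ Finset.univ, (Complex.arg (Complex.exp ((d k : ℂ) * Complex.I)))^2 ≤ (d k)^2 :=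
    fun k _ => (arg_exp_sq (d k)).1
  have hle : ∑ k, (e k)^2 ≤ ∑ k, (d k)^2 := by
    rw [hEsum]; exact Finset.sum_le_sum hterm
  have hnn : ∀ (f : Fin n → ℝ), 0 ≤ ∑ k, (f k)^2 :=
    fun f => Finset.sum_nonneg (fun k _ => sq_nonneg _)
  constructor
  · rw [hFX, hFY]
    exact Real.sqrt_le_sqrt hle
  · rw [hFX, hFY]
    rw [Real.sqrt_inj (hnn e) (hnn d)]
    have hiff1 : (∑ k, (e k)^2 = ∑ k, (d k)^2) ↔ ∀ k, |d k| ≤ Real.pi := by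
      rw [hEsum, Finset.sum_eq_sum_iff_of_le hterm]
      constructor
      · intro h k
        exact (arg_exp_sq (d k)).2.mp (h k (Finset.mem_univ k))
      · intro h k _
        exact (arg_exp_sq (d k)).2.mpr (h k)
    rw [hiff1]
    constructor
    · intro h
      refine ⟨hX, hexp, ?_⟩
      intro μ hμ
      rw [hspecX] at hμ
      obtain ⟨k, rfl⟩ := hμ
      rw [him]
      exact ⟨(abs_le.mp (h k)).1, (abs_le.mp (h k)).2⟩
    · intro h k
      have hk : (d k : ℂ) * Complex.I ∈ spectrum ℂ X := by
        rw [hspecX]; exact ⟨k, rfl⟩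
      have h2 := h.2.2 _ hk
      rw [him] at h2
      exact abs_le.mpr ⟨h2.1, h2.2⟩
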